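/- Let m be a positive integer coprime to 6 and let B be a residue class modulo m. If 2·3^{-1}·B + 36^{-1} (inverses taken modulo m) is not a quadratic residue modulo m, then the coefficient of q^n in ∏_{k≥1}(1-q^k) is even for every n ≡ B (mod m). -/

import Mathlib

/-!
By Euler's pentagonal number theorem `c1 n = 0` unless `n = k(3k-1)/2` for some `k : ℤ`, and then
`24n + 1 = (6k - 1)²`. Since `2·3⁻¹·n + 36⁻¹ = 36⁻¹·(24n + 1)`, this makes `2·3⁻¹·n + 36⁻¹` the
square of `(6k - 1)·6⁻¹` modulo any `m` coprime to 6.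
-/

open PowerSeries

/-- `∏_{k≥1}(1-q^k)` as a formal power series over `ℤ`. -/
noncomputable def fZ : PowerSeries ℤ :=
  PowerSeries.mk fun n =>
    PowerSeries.coeff n
      (∏ k ∈ Finset.range (n + 1), (1 - PowerSeries.X ^ (k + 1)))

/-- `c_1(n)`: the coefficient of `q^n` in `∏_{k≥1}(1-q^k)`. -/
noncomputable def c1 (n : ℕ) : ℤ := PowerSeries.coeff n fZ

section PartialProducts

variable {R : Type*} [CommRing R]

theorem X_pow_dvd_prod_one_sub_X_pow_sub_one (n : ℕ) {s : Finset ℕ}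
    (hs : ∀ k ∈ s, n ≤ k) :
    (X : R⟦X⟧) ^ (n + 1) ∣ (∏ k ∈ s, (1 - X ^ (k + 1))) - 1 := by
  refine Finset.prod_induction _ (fun f : R⟦X⟧ => X ^ (n + 1) ∣ f - 1) ?_ (by simp) ?_
  · intro a b ha hb
    rw [show a * b - 1 = (a - 1) * b + (b - 1) by ring]
    exact dvd_add (dvd_mul_of_dvd_left ha b) hb
  · intro k hk
    rw [sub_sub_cancel_left]
    exact (pow_dvd_pow X (Nat.succ_le_succ (hs k hk))).neg_right

theorem coeff_prod_one_sub_X_pow_of_range_subset {n : ℕ} {s : Finset ℕ}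
    (hs : Finset.range (n + 1) ⊆ s) :
    coeff n (∏ k ∈ s, (1 - X ^ (k + 1) : R⟦X⟧)) =
      coeff n (∏ k ∈ Finset.range (n + 1), (1 - X ^ (k + 1) : R⟦X⟧)) := by
  set P := ∏ k ∈ Finset.range (n + 1), (1 - X ^ (k + 1) : R⟦X⟧)
  set Q := ∏ k ∈ s \ Finset.range (n + 1), (1 - X ^ (k + 1) : R⟦X⟧)
  have hQ : (X : R⟦X⟧) ^ (n + 1) ∣ (Q - 1) * P :=
    dvd_mul_of_dvd_left (X_pow_dvd_prod_one_sub_X_pow_sub_one n fun k hk =>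
      (not_lt.mp (Finset.mem_range.not.mp (Finset.mem_sdiff.mp hk).2)).trans' n.le_succ) P
  rw [← Finset.prod_sdiff hs, show Q * P = P + (Q - 1) * P by ring, map_add,
    (X_pow_dvd_iff.mp hQ) n n.lt_succ_self, add_zero]

end PartialProducts

theorem c1_eq_coeff_pentagonalSeries (n : ℕ) : c1 n = coeff n (pentagonalSeries ℤ) := by
  obtain ⟨s, hs⟩ := Filter.eventually_atTop.mp (coeff_prod_one_sub_X_pow_eventually_eq ℤ n)
  rw [c1, fZ, coeff_mk, ← coeff_prod_one_sub_X_pow_of_range_subset Finset.subset_union_left,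
    hs _ Finset.subset_union_right]

theorem c1_eq_zero_of_notMem_range_pentagonal {n : ℕ} (hn : n ∉ Set.range pentagonal) :
    c1 n = 0 := by
  rw [c1_eq_coeff_pentagonalSeries, coeff_pentagonalSeries_eq_zero ℤ hn]

theorem sq_six_mul_sub_one_eq_pentagonal (k : ℤ) :
    (6 * k - 1) ^ 2 = 24 * (pentagonal k : ℤ) + 1 := by
  linear_combination (-12) * two_mul_natCast_pentagonal k

theorem ZMod.exists_sq_eq_of_sq_eq_twentyFour_mul_add_one {m : ℕ} (hm : m.Coprime 6)
    {B y : ZMod m} (hy : y ^ 2 = 24 * B + 1) :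
    ∃ x : ZMod m, x ^ 2 = 2 * (3 : ZMod m)⁻¹ * B + (36 : ZMod m)⁻¹ := by
  have h6 : IsUnit (6 : ZMod m) := by
    simpa using (ZMod.unitOfCoprime 6 hm.symm).isUnit
  have h3 : IsUnit (3 : ZMod m) := isUnit_of_mul_isUnit_right (x := 2) (by norm_num [h6])
  have h36 : IsUnit (36 : ZMod m) := by
    rw [show (36 : ZMod m) = 6 * 6 by norm_num]
    exact h6.mul h6
  have e6 : (6 : ZMod m)⁻¹ * 6 = 1 := ZMod.inv_mul_of_unit _ h6
  have e3 : (3 : ZMod m)⁻¹ * 3 = 1 := ZMod.inv_mul_of_unit _ h3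
  have e36 : (36 : ZMod m) * (36 : ZMod m)⁻¹ = 1 := ZMod.mul_inv_of_unit _ h36
  refine ⟨y * 6⁻¹, h36.mul_left_cancel ?_⟩
  linear_combination (y ^ 2 * (6⁻¹ * 6 + 1)) * e6 - 24 * B * e3 - e36 + hy

theorem pentagonal_even_progression_general (m : ℕ) (hcop : Nat.Coprime m 6)
    (B : ZMod m)
    (hqr : ¬ ∃ x : ZMod m, x ^ 2 = 2 * (3 : ZMod m)⁻¹ * B + (36 : ZMod m)⁻¹) :
    ∀ n : ℕ, (n : ZMod m) = B → (2 : ℤ) ∣ c1 n := by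
  intro n hn
  by_contra hodd
  obtain ⟨k, rfl⟩ : n ∈ Set.range pentagonal := by
    by_contra hpent
    exact hodd (c1_eq_zero_of_notMem_range_pentagonal hpent ▸ dvd_zero 2)
  refine hqr (ZMod.exists_sq_eq_of_sq_eq_twentyFour_mul_add_one hcop
    (y := ((6 * k - 1 : ℤ) : ZMod m)) ?_)
  rw [← hn]
  exact_mod_cast congrArg (Int.cast : ℤ → ZMod m) (sq_six_mul_sub_one_eq_pentagonal k)

/-- If `m` is positive and coprime to 6, `B : ZMod m`, and `2·3⁻¹·B + 36⁻¹` is not a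
quadratic residue mod `m`, then `c_1(n)` is even for every `n ≡ B (mod m)`. -/
theorem pentagonal_even_progression (m : ℕ) (hm : 0 < m) (hcop : Nat.Coprime m 6)
    (B : ZMod m)
    (hqr : ¬ ∃ x : ZMod m, x ^ 2 = 2 * (3 : ZMod m)⁻¹ * B + (36 : ZMod m)⁻¹) :
    ∀ n : ℕ, (n : ZMod m) = B → (2 : ℤ) ∣ c1 n :=
  pentagonal_even_progression_general m hcop B hqr
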